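/- Define AND on ℤ_p by digit-wise multiplication modulo p: x AND y = Σ_{k≥0} ((x_k · y_k) mod p) p^k, where x_k, y_k are the p-adic digits. Let f : ℤ_p → ℤ_p be 1-Lipschitz with coordinate functions φ_k, none identically zero. Then f(x AND y) = f(x) AND f(y) for all x, y if and only if each φ_k is a monomial: φ_k(x_0,...,x_k) = x_0^{s_0^{(k)}} · x_1^{s_1^{(k)}} ⋯ x_k^{s_k^{(k)}} (mod p) with exponents s_i^{(k)} ∈ {1,...,p-1} (or exponent 0 allowing a variable to be absent). -/

import Mathlib

variable (p : ℕ) [Fact p.Prime]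

/-- The k-th digit of the canonical p-adic expansion of `x`. -/
noncomputable def digit (x : ℤ_[p]) (k : ℕ) : ℕ := x.appr (k + 1) / p ^ k

/-- Digit-wise multiplication modulo `p` on `ℤ_[p]`. -/
noncomputable def pAND (x y : ℤ_[p]) : ℤ_[p] :=
  ∑' k : ℕ, (((digit p x k * digit p y k) % p : ℕ) : ℤ_[p]) * (p : ℤ_[p]) ^ k

/-!
The `k`-th digit of `x AND y` is `x_k * y_k` in `ZMod p`, and every digit vector is realized, so
`f` commutes with `AND` exactly when each `φ k` is multiplicative on `(ZMod p)^(k+1)`. A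
multiplicative map that is not identically zero is a monoid hom, hence the product of its
restrictions to the coordinate axes; and every monoid endomorphism of `ZMod p` is `a ↦ a ^ t` with
`t ≤ p - 1`, because `(ZMod p)ˣ` is cyclic and `a ^ p = a`.
-/

namespace PadicInt

variable {p}

theorem toZModPow_eq_natCast_appr (x : ℤ_[p]) (n : ℕ) : toZModPow n x = x.appr n := rfl

theorem appr_eq_of_sub_mem_span {x : ℤ_[p]} {n a : ℕ} (ha : a < p ^ n)
    (h : x - a ∈ Ideal.span {(p : ℤ_[p]) ^ n}) : x.appr n = a := by
  have hx : toZModPow n x = toZModPow n (a : ℤ_[p]) := by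
    rwa [← sub_eq_zero, ← map_sub, ← RingHom.mem_ker, ker_toZModPow]
  rw [map_natCast, toZModPow_eq_natCast_appr] at hx
  simpa only [ZMod.val_natCast_of_lt (x.appr_lt n), ZMod.val_natCast_of_lt ha]
    using congrArg ZMod.val hx

theorem ext_of_appr {x y : ℤ_[p]} (h : ∀ n, x.appr n = y.appr n) : x = y :=
  ext_of_toZModPow.mp fun n => by simp only [toZModPow_eq_natCast_appr, h]

end PadicInt

section Digits

variable {p}

theorem digit_lt (x : ℤ_[p]) (k : ℕ) : digit p x k < p := by
  rw [digit, Nat.div_lt_iff_lt_mul (pow_pos (Fact.out : p.Prime).pos k), ← pow_succ']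
  exact x.appr_lt (k + 1)

theorem appr_succ_eq_add_digit (x : ℤ_[p]) (k : ℕ) :
    x.appr (k + 1) = x.appr k + digit p x k * p ^ k := by
  obtain ⟨t, ht⟩ := x.dvd_appr_sub_appr k (k + 1) (k.le_add_right 1)
  have hmono := x.appr_mono (k.le_add_right 1)
  have hmod : x.appr (k + 1) % p ^ k = x.appr k := by
    rw [show x.appr (k + 1) = x.appr k + p ^ k * t by omega, Nat.add_mul_mod_self_left,
      Nat.mod_eq_of_lt (x.appr_lt k)]
  conv_lhs => rw [← Nat.mod_add_div (x.appr (k + 1)) (p ^ k), hmod]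
  rw [digit, Nat.mul_comm]

theorem eq_of_digit_eq {x y : ℤ_[p]} (h : ∀ k, digit p x k = digit p y k) : x = y := by
  refine PadicInt.ext_of_appr fun n => ?_
  induction n with
  | zero => simp only [PadicInt.appr]
  | succ n ih => rw [appr_succ_eq_add_digit, appr_succ_eq_add_digit, ih, h n]

theorem eq_of_natCast_digit_eq {x y : ℤ_[p]} (h : ∀ k, (digit p x k : ZMod p) = digit p y k) :
    x = y :=
  eq_of_digit_eq fun k => by
    simpa only [ZMod.val_natCast_of_lt (digit_lt _ _)] using congrArg ZMod.val (h k)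

theorem summable_natCast_mul_pow (c : ℕ → ℕ) :
    Summable fun k => (c k : ℤ_[p]) * (p : ℤ_[p]) ^ k := by
  have hp : (1 : ℝ) < p := by exact_mod_cast (Fact.out : p.Prime).one_lt
  refine Summable.of_norm_bounded (summable_geometric_of_lt_one (by positivity)
    (inv_lt_one_of_one_lt₀ hp)) fun k => ?_
  calc ‖(c k : ℤ_[p]) * (p : ℤ_[p]) ^ k‖ ≤ ‖(p : ℤ_[p]) ^ k‖ := by
        rw [norm_mul]; exact mul_le_of_le_one_left (norm_nonneg _) (PadicInt.norm_le_one _)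
    _ = (p : ℝ)⁻¹ ^ k := by rw [PadicInt.norm_p_pow, zpow_neg, zpow_natCast, inv_pow]

theorem sum_mul_pow_lt {b : ℕ} {c : ℕ → ℕ} (hc : ∀ k, c k < b) (m : ℕ) :
    ∑ k ∈ Finset.range m, c k * b ^ k < b ^ m := by
  induction m with
  | zero => simp
  | succ m ih =>
    have h := Nat.mul_le_mul_right (b ^ m) (hc m)
    rw [Nat.succ_mul] at h
    rw [Finset.sum_range_succ, pow_succ']
    omega

theorem appr_tsum_natCast_mul_pow {c : ℕ → ℕ} (hc : ∀ k, c k < p) (m : ℕ) :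
    (∑' k, (c k : ℤ_[p]) * (p : ℤ_[p]) ^ k).appr m = ∑ k ∈ Finset.range m, c k * p ^ k := by
  refine PadicInt.appr_eq_of_sub_mem_span (sum_mul_pow_lt hc m) ?_
  rw [← (summable_natCast_mul_pow c).sum_add_tsum_nat_add m]
  push_cast
  rw [add_sub_cancel_left, Ideal.mem_span_singleton]
  have htail : ∀ k, (c (k + m) : ℤ_[p]) * (p : ℤ_[p]) ^ (k + m)
      = (p : ℤ_[p]) ^ m * ((c (k + m) : ℤ_[p]) * (p : ℤ_[p]) ^ k) := fun k => by ring
  rw [tsum_congr htail, (summable_natCast_mul_pow fun k => c (k + m)).tsum_mul_left]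
  exact dvd_mul_right _ _

theorem digit_tsum_natCast_mul_pow {c : ℕ → ℕ} (hc : ∀ k, c k < p) (m : ℕ) :
    digit p (∑' k, (c k : ℤ_[p]) * (p : ℤ_[p]) ^ k) m = c m := by
  rw [digit, appr_tsum_natCast_mul_pow hc, Finset.sum_range_succ,
    Nat.add_mul_div_right _ _ (pow_pos (Fact.out : p.Prime).pos m),
    Nat.div_eq_of_lt (sum_mul_pow_lt hc m), zero_add]

theorem exists_natCast_digit_eq (k : ℕ) (v : Fin (k + 1) → ZMod p) :
    ∃ x : ℤ_[p], (fun i : Fin (k + 1) => (digit p x i : ZMod p)) = v := by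
  let c : ℕ → ℕ := fun j => if h : j < k + 1 then (v ⟨j, h⟩).val else 0
  have hc : ∀ j, c j < p := fun j => by
    unfold c; split_ifs
    exacts [ZMod.val_lt _, (Fact.out : p.Prime).pos]
  refine ⟨∑' j, (c j : ℤ_[p]) * (p : ℤ_[p]) ^ j, funext fun i => ?_⟩
  rw [digit_tsum_natCast_mul_pow hc]
  simp only [c, dif_pos i.isLt, ZMod.natCast_val, ZMod.cast_id', id_eq]

theorem natCast_digit_pAND (x y : ℤ_[p]) (k : ℕ) :
    (digit p (pAND p x y) k : ZMod p) = digit p x k * digit p y k := by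
  rw [pAND, digit_tsum_natCast_mul_pow fun _ => Nat.mod_lt _ (Fact.out : p.Prime).pos,
    ZMod.natCast_mod, Nat.cast_mul]

end Digits

theorem MonoidHom.exists_pow_eq_of_isCyclic {G : Type*} [Group G] [Finite G] [IsCyclic G]
    (σ : G →* G) : ∃ t : ℕ, ∀ g, σ g = g ^ t := by
  obtain ⟨g, hg⟩ := IsCyclic.exists_monoid_generator (α := G)
  obtain ⟨t, ht⟩ := Submonoid.mem_powers_iff _ _ |>.mp (hg (σ g))
  refine ⟨t, fun x => ?_⟩
  obtain ⟨m, rfl⟩ := Submonoid.mem_powers_iff _ _ |>.mp (hg x)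
  rw [map_pow, ← ht, ← pow_mul, ← pow_mul, mul_comm]

namespace ZMod

variable {p}

theorem exists_pow_eq_pow_of_pos {t : ℕ} (ht : 0 < t) :
    ∃ t', 0 < t' ∧ t' ≤ p - 1 ∧ ∀ a : ZMod p, a ^ t = a ^ t' := by
  have hp := (Fact.out : p.Prime).one_lt
  induction t using Nat.strong_induction_on with
  | _ t ih =>
  by_cases hle : t ≤ p - 1
  · exact ⟨t, ht, hle, fun _ => rfl⟩
  obtain ⟨t', ht'pos, ht'le, ht'⟩ := ih (t - (p - 1)) (by omega) (by omega)
  refine ⟨t', ht'pos, ht'le, fun a => ?_⟩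
  calc a ^ t = a ^ (t - p) * a ^ p := by rw [← pow_add]; congr 1; omega
    _ = a ^ (t - (p - 1)) := by rw [pow_card, ← pow_succ]; congr 1; omega
    _ = a ^ t' := ht' a

theorem exists_monoidHom_eq_pow (ψ : ZMod p →* ZMod p) : ∃ t ≤ p - 1, ∀ a, ψ a = a ^ t := by
  by_cases h0 : ψ 0 = 0
  · obtain ⟨t, ht⟩ := (Units.map ψ).exists_pow_eq_of_isCyclic
    -- Shifting `t` by `p - 1` does not change `u ^ t` on units and makes the exponent positive,
    -- as `ψ 0 = 0` requires.
    obtain ⟨t', ht'pos, ht'le, ht'⟩ := exists_pow_eq_pow_of_pos (p := p) (t := t + (p - 1))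
      (by have := (Fact.out : p.Prime).one_lt; omega)
    refine ⟨t', ht'le, fun a => ?_⟩
    rcases eq_or_ne a 0 with rfl | ha
    · rw [h0, zero_pow ht'pos.ne']
    · obtain ⟨u, rfl⟩ := ha.isUnit
      rw [← ht', pow_add, pow_card_sub_one_eq_one ha, mul_one]
      exact congrArg Units.val (ht u)
  · -- `ψ 0 = ψ (0 * a) = ψ 0 * ψ a` forces `ψ a = 1`.
    refine ⟨0, Nat.zero_le _, fun a => ?_⟩
    exact mul_left_cancel₀ h0 (by rw [← map_mul, zero_mul, pow_zero, mul_one])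

theorem exists_pi_monoidHom_eq_prod_pow {ι : Type*} [Fintype ι] [DecidableEq ι]
    (Φ : (ι → ZMod p) →* ZMod p) :
    ∃ s : ι → ℕ, (∀ i, s i ≤ p - 1) ∧ ∀ v, Φ v = ∏ i, v i ^ s i := by
  choose s hs_le hs using fun i =>
    exists_monoidHom_eq_pow (Φ.comp (MonoidHom.mulSingle (fun _ => ZMod p) i))
  refine ⟨s, hs_le, fun v => ?_⟩
  calc Φ v = Φ (∏ i, Pi.mulSingle i (v i)) := by rw [Finset.univ_prod_mulSingle]
    _ = ∏ i, v i ^ s i := by rw [map_prod]; exact Finset.prod_congr rfl fun i _ => hs i (v i)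

theorem exists_eq_prod_pow_of_map_mul {ι : Type*} [Fintype ι] [DecidableEq ι]
    (f : (ι → ZMod p) → ZMod p) (hmul : ∀ v w, f (v * w) = f v * f w) (hne : ∃ v, f v ≠ 0) :
    ∃ s : ι → ℕ, (∀ i, s i ≤ p - 1) ∧ ∀ v, f v = ∏ i, v i ^ s i := by
  obtain ⟨v, hv⟩ := hne
  have hone : f 1 = 1 := mul_left_cancel₀ hv (by rw [← hmul, mul_one, mul_one])
  exact exists_pi_monoidHom_eq_prod_pow ⟨⟨f, hone⟩, hmul⟩

end ZMod

theorem stmt_11 (f : ℤ_[p] → ℤ_[p])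
    (φ : (k : ℕ) → (Fin (k + 1) → ZMod p) → ZMod p)
    (hφ : ∀ (x : ℤ_[p]) (k : ℕ),
      ((digit p (f x) k : ZMod p)) = φ k (fun i => (digit p x i : ZMod p)))
    (hnz : ∀ k : ℕ, ∃ v : Fin (k + 1) → ZMod p, φ k v ≠ 0) :
    (∀ x y : ℤ_[p], f (pAND p x y) = pAND p (f x) (f y)) ↔
      ∀ k : ℕ, ∃ s : Fin (k + 1) → ℕ, (∀ i, s i ≤ p - 1) ∧
        ∀ v : Fin (k + 1) → ZMod p, φ k v = ∏ i, v i ^ s i := by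
  have hdigits_pAND : ∀ x y k, (fun i : Fin (k + 1) => (digit p (pAND p x y) i : ZMod p)) =
      (fun i : Fin (k + 1) => (digit p x i : ZMod p)) *
        fun i : Fin (k + 1) => (digit p y i : ZMod p) :=
    fun x y _ => funext fun i => natCast_digit_pAND x y i
  constructor
  · intro hAND k
    refine ZMod.exists_eq_prod_pow_of_map_mul (φ k) (fun v w => ?_) (hnz k)
    obtain ⟨x, rfl⟩ := exists_natCast_digit_eq k v
    obtain ⟨y, rfl⟩ := exists_natCast_digit_eq k w
    rw [← hdigits_pAND, ← hφ, hAND, natCast_digit_pAND, hφ, hφ]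
  · intro hmono x y
    refine eq_of_natCast_digit_eq fun k => ?_
    obtain ⟨s, -, hs⟩ := hmono k
    rw [hφ, hdigits_pAND, natCast_digit_pAND, hφ, hφ, hs, hs, hs, ← Finset.prod_mul_distrib]
    simp only [Pi.mul_apply, mul_pow]
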